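/- arXiv:2310.05433 — 4 statements merged into one kernel-verified Lean document; each statement's English description precedes it below -/
import Mathlib

section
/- Let n ≥ 1 and d_1, …, d_{n+1} ≥ 1 be integers. For 1 ≤ i ≤ n+1 and 1 ≤ j ≤ d_i let ℓ_{i,j} ∈ ℂ[z_0, …, z_n] be linear forms such that any n+1 members of the whole family {ℓ_{i,j}} are linearly independent over ℂ (i.e. the corresponding hyperplanes of ℙⁿ(ℂ) are in general position). Set F_i := ∏_{j=1}^{d_i} ℓ_{i,j} and let J := det(∂F_i/∂z_k)_{1 ≤ i ≤ n+1, 0 ≤ k ≤ n} be the Jacobian determinant. Then: (a) the polynomials F_1, …, F_{n+1} have no common zero in ℂ^{n+1} ∖ {0}; and (b) for every subset I ⊂ {1, …, n+1} with |I| = n and every p ∈ ℂ^{n+1} ∖ {0} satisfying F_i(p) = 0 for all i ∈ I, one has J(p) ≠ 0. In other words, the hypersurface V = {J = 0} together with the hypersurfaces D_i = {F_i = 0} are in general position in ℙⁿ(ℂ): any n+1 of the n+2 hypersurfaces V, D_1, …, D_{n+1} have empty intersection. -/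
open MvPolynomial
open Matrix

lemma pderiv_finset_prod_aux {ι σ R : Type*} [CommSemiring R] [DecidableEq ι] [DecidableEq σ]
    (k : σ) (s : Finset ι) (f : ι → MvPolynomial σ R) :
    pderiv k (∏ j ∈ s, f j) = ∑ j ∈ s, pderiv k (f j) * ∏ j' ∈ s.erase j, f j' := by
  induction s using Finset.induction_on with
  | empty => simp
  | insert b t ha ih =>
    rw [Finset.prod_insert ha, pderiv_mul, ih, Finset.sum_insert ha, Finset.erase_insert ha,
      Finset.mul_sum]
    congr 1
    apply Finset.sum_congr rfl
    intro j hj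
    rw [Finset.erase_insert_of_ne (by rintro rfl; exact ha hj), Finset.prod_insert
      (fun h => ha (Finset.erase_subset _ _ h))]
    ring

lemma dot_zero_aux (n : ℕ) (d : Fin (n + 1) → ℕ)
    (a : (i : Fin (n + 1)) → Fin (d i) → (Fin (n + 1) → ℂ))
    (hgen : ∀ s : Fin (n + 1) → ((i : Fin (n + 1)) × Fin (d i)), Function.Injective s →
      LinearIndependent ℂ (fun k => a (s k).1 (s k).2))
    (s : Fin (n + 1) → ((i : Fin (n + 1)) × Fin (d i))) (hs : Function.Injective s)
    (p : Fin (n + 1) → ℂ) (hp : ∀ x, ∑ k, a (s x).1 (s x).2 k * p k = 0) : p = 0 := by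
  by_contra hp0
  set A : Matrix (Fin (n + 1)) (Fin (n + 1)) ℂ := Matrix.of fun x k => a (s x).1 (s x).2 k with hA
  have hmv : A.mulVec p = 0 := by
    funext x
    simpa [hA, Matrix.mulVec, dotProduct] using hp x
  have hdet : A.det = 0 := Matrix.exists_mulVec_eq_zero_iff.mp ⟨p, hp0, hmv⟩
  have hdetT : Aᵀ.det = 0 := by rw [Matrix.det_transpose]; exact hdet
  obtain ⟨μ, hμ0, hμ⟩ := Matrix.exists_mulVec_eq_zero_iff.mpr hdetT
  have hμ' : ∀ k, ∑ x, μ x * a (s x).1 (s x).2 k = 0 := by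
    intro k
    have := congrFun hμ k
    simpa [hA, Matrix.mulVec, dotProduct, mul_comm] using this
  have hli := hgen s hs
  rw [Fintype.linearIndependent_iff] at hli
  apply hμ0
  funext x
  refine hli μ ?_ x
  funext k
  simpa [Finset.sum_apply] using hμ' k

/-- Let `n ≥ 1`, `d i ≥ 1`, and let `ℓ i j = ∑ k, a i j k • z k` be linear
forms whose coefficient vectors are such that any `n+1` members of the whole family are
linearly independent over `ℂ` (hyperplanes in general position).  With `F i = ∏ j, ℓ i j`
and `J` the Jacobian determinant of `(F₁, …, F_{n+1})`, the hypersurface `{J = 0}` together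
with the hypersurfaces `{F i = 0}` are in general position: (a) the `F i`'s have no common
zero in `ℂ^{n+1} ∖ {0}`, and (b) for any `n` of the `F i`'s, a common nonzero zero of them
is not a zero of `J`. -/
theorem jacobian_general_position
    (n : ℕ) (hn : 1 ≤ n) (d : Fin (n + 1) → ℕ) (hd : ∀ i, 1 ≤ d i)
    (a : (i : Fin (n + 1)) → Fin (d i) → (Fin (n + 1) → ℂ))
    (hgen : ∀ s : Fin (n + 1) → ((i : Fin (n + 1)) × Fin (d i)), Function.Injective s →
      LinearIndependent ℂ (fun k => a (s k).1 (s k).2))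
    (ℓ : (i : Fin (n + 1)) → Fin (d i) → MvPolynomial (Fin (n + 1)) ℂ)
    (hℓ : ∀ i j, ℓ i j = ∑ k, C (a i j k) * X k)
    (F : Fin (n + 1) → MvPolynomial (Fin (n + 1)) ℂ)
    (hF : ∀ i, F i = ∏ j, ℓ i j)
    (J : MvPolynomial (Fin (n + 1)) ℂ)
    (hJ : J = (Matrix.of fun i k => pderiv k (F i)).det) :
    (∀ p : Fin (n + 1) → ℂ, p ≠ 0 → ∃ i, eval p (F i) ≠ 0) ∧
    (∀ I : Finset (Fin (n + 1)), I.card = n →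
      ∀ p : Fin (n + 1) → ℂ, p ≠ 0 → (∀ i ∈ I, eval p (F i) = 0) → eval p J ≠ 0) := by
  have hevalℓ : ∀ (p : Fin (n + 1) → ℂ) i j, eval p (ℓ i j) = ∑ k, a i j k * p k := by
    intro p i j
    rw [hℓ]
    simp
  have hevalF : ∀ (p : Fin (n + 1) → ℂ) i, eval p (F i) = ∏ j, eval p (ℓ i j) := by
    intro p i
    rw [hF]
    exact map_prod (eval p) _ _
  have parta : ∀ p : Fin (n + 1) → ℂ, p ≠ 0 → ∃ i, eval p (F i) ≠ 0 := by
    intro p hp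
    by_contra h
    push_neg at h
    have hj : ∀ i, ∃ j, eval p (ℓ i j) = 0 := by
      intro i
      have hi := h i
      rw [hevalF] at hi
      rcases Finset.prod_eq_zero_iff.mp hi with ⟨j, _, hj⟩
      exact ⟨j, hj⟩
    choose j hjv using hj
    refine hp (dot_zero_aux n d a hgen (fun i => ⟨i, j i⟩)
      (fun x y hxy => congrArg Sigma.fst hxy) p ?_)
    intro x
    rw [← hevalℓ]
    exact hjv x
  refine ⟨parta, ?_⟩
  intro I hI p hp hvan
  -- the complement of I is a singleton
  have hIc : Iᶜ.card = 1 := by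
    rw [Finset.card_compl, hI]
    simp
  obtain ⟨i1, hi1⟩ := Finset.card_eq_one.mp hIc
  have hi1I : i1 ∉ I := by
    have : i1 ∈ Iᶜ := by rw [hi1]; exact Finset.mem_singleton_self i1
    simpa using this
  have hmem : ∀ i, i ≠ i1 → i ∈ I := by
    intro i hi
    by_contra hiI
    have : i ∈ Iᶜ := Finset.mem_compl.mpr hiI
    rw [hi1, Finset.mem_singleton] at this
    exact hi this
  -- F i1 does not vanish at p
  have hF1 : eval p (F i1) ≠ 0 := by
    obtain ⟨i, hi⟩ := parta p hp
    have : i = i1 := by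
      by_contra h
      exact hi (hvan i (hmem i h))
    rwa [this] at hi
  -- choose a vanishing linear factor for each i ∈ I
  have hjex : ∀ i, ∃ j : Fin (d i), i ∈ I → eval p (ℓ i j) = 0 := by
    intro i
    by_cases hi : i ∈ I
    · have := hvan i hi
      rw [hevalF] at this
      rcases Finset.prod_eq_zero_iff.mp this with ⟨j, _, hj⟩
      exact ⟨j, fun _ => hj⟩
    · exact ⟨⟨0, hd i⟩, fun h => absurd h hi⟩
  choose j hjv using hjex
  -- uniqueness of the vanishing factor
  have huniq : ∀ i ∈ I, ∀ j', j' ≠ j i → eval p (ℓ i j') ≠ 0 := by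
    intro i hi j' hne hz
    refine hp (dot_zero_aux n d a hgen
      (fun x => if x = i1 then ⟨i, j'⟩ else ⟨x, j x⟩) ?_ p ?_)
    · intro x y hxy
      simp only at hxy
      by_cases hx : x = i1 <;> by_cases hy : y = i1
      · rw [hx, hy]
      · simp only [hx, hy, if_true, if_false] at hxy
        obtain ⟨h1, h2⟩ := Sigma.mk.inj_iff.mp hxy
        subst h1
        exact absurd (eq_of_heq h2) hne
      · simp only [hx, hy, if_true, if_false] at hxy
        obtain ⟨h1, h2⟩ := Sigma.mk.inj_iff.mp hxy
        subst h1
        exact absurd (eq_of_heq h2).symm hne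
      · simp only [hx, hy, if_false] at hxy
        exact congrArg Sigma.fst hxy
    · intro x
      by_cases hx : x = i1
      · rw [if_pos hx, ← hevalℓ]
        exact hz
      · rw [if_neg hx, ← hevalℓ]
        exact hjv x (hmem x hx)
  -- no linear factor of F i1 vanishes at p
  have hℓ1 : ∀ j', eval p (ℓ i1 j') ≠ 0 := by
    intro j' hz
    apply hF1
    rw [hevalF]
    exact Finset.prod_eq_zero (Finset.mem_univ j') hz
  -- the cofactor products
  set c : (i : Fin (n + 1)) → ℂ :=
    fun i => ∏ j' ∈ Finset.univ.erase (j i), eval p (ℓ i j') with hc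
  have hcne : ∀ i ∈ I, c i ≠ 0 := by
    intro i hi
    rw [hc]
    rw [Finset.prod_ne_zero_iff]
    intro j' hj'
    exact huniq i hi j' (Finset.ne_of_mem_erase hj')
  -- the evaluated Jacobian matrix
  set G : Fin (n + 1) → Fin (n + 1) → ℂ := fun i k => eval p (pderiv k (F i)) with hGdef
  have hpd : ∀ i j' k, eval p (pderiv k (ℓ i j')) = a i j' k := by
    intro i j' k
    rw [hℓ]
    rw [map_sum (pderiv k)]
    simp [pderiv_C_mul, Pi.single_apply, Finset.mul_sum, apply_ite, mul_comm]
  have hG : ∀ i k, G i k =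
      ∑ j', a i j' k * ∏ j'' ∈ Finset.univ.erase j', eval p (ℓ i j'') := by
    intro i k
    rw [hGdef]
    simp only
    rw [hF i, pderiv_finset_prod_aux, map_sum]
    apply Finset.sum_congr rfl
    intro j' _
    rw [_root_.map_mul, hpd, map_prod]
  -- rows corresponding to i ∈ I
  have hrowI : ∀ i ∈ I, ∀ k, G i k = c i * a i (j i) k := by
    intro i hi k
    rw [hG]
    rw [Finset.sum_eq_single (j i)]
    · rw [hc]; ring
    · intro j' _ hne
      have : (∏ j'' ∈ Finset.univ.erase j', eval p (ℓ i j'')) = 0 :=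
        Finset.prod_eq_zero (Finset.mem_erase.mpr ⟨fun h => hne h.symm, Finset.mem_univ _⟩)
          (hjv i hi)
      rw [this, mul_zero]
    · intro h
      exact absurd (Finset.mem_univ (j i)) h
  -- Euler's identity at p
  have heuler : ∀ i, ∑ k, p k * G i k = (d i : ℂ) * eval p (F i) := by
    intro i
    have : ∑ k, p k * G i k =
        ∑ j', (∑ k, a i j' k * p k) * ∏ j'' ∈ Finset.univ.erase j', eval p (ℓ i j'') := by
      simp only [hG, Finset.mul_sum, Finset.sum_mul]
      rw [Finset.sum_comm]
      apply Finset.sum_congr rfl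
      intro j' _
      apply Finset.sum_congr rfl
      intro k _
      ring
    rw [this]
    have : ∀ j' : Fin (d i),
        (∑ k, a i j' k * p k) * ∏ j'' ∈ Finset.univ.erase j', eval p (ℓ i j'')
          = eval p (F i) := by
      intro j'
      rw [← hevalℓ p i j', hevalF, mul_comm, Finset.prod_erase_mul _ _ (Finset.mem_univ j')]
    rw [Finset.sum_congr rfl (fun j' _ => this j')]
    simp [Finset.card_univ, mul_comm]
  -- main argument
  intro hJ0
  have hdet : (Matrix.of G).det = 0 := by
    have : eval p J = ((Matrix.of fun i k => pderiv k (F i)).map (eval p)).det := by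
      rw [hJ]
      exact RingHom.map_det (eval p) _
    rw [hJ0] at this
    have hMeq : ((Matrix.of fun i k => pderiv k (F i)).map (eval p)) = Matrix.of G := by
      funext i k
      rfl
    rw [hMeq] at this
    exact this.symm
  have hdetT : (Matrix.of G)ᵀ.det = 0 := by rw [Matrix.det_transpose]; exact hdet
  obtain ⟨lam, hlam0, hlam⟩ := Matrix.exists_mulVec_eq_zero_iff.mpr hdetT
  have hcomb : ∀ k, ∑ i, lam i * G i k = 0 := by
    intro k
    have := congrFun hlam k
    simpa [Matrix.mulVec, dotProduct, mul_comm] using this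
  -- lam i1 = 0 via Euler
  have hlam1 : lam i1 = 0 := by
    have h0 : ∑ i, lam i * ((d i : ℂ) * eval p (F i)) = 0 := by
      have : ∑ i, lam i * ∑ k, p k * G i k = ∑ k, p k * ∑ i, lam i * G i k := by
        simp only [Finset.mul_sum]
        rw [Finset.sum_comm]
        apply Finset.sum_congr rfl
        intro i _
        apply Finset.sum_congr rfl
        intro k _
        ring
      have e1 : ∑ i, lam i * ((d i : ℂ) * eval p (F i))
          = ∑ i, lam i * ∑ k, p k * G i k := by
        apply Finset.sum_congr rfl
        intro i _
        rw [heuler i]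
      rw [e1, this]
      simp only [hcomb, mul_zero, Finset.sum_const_zero]
    rw [Finset.sum_eq_single i1] at h0
    · have hd1 : (d i1 : ℂ) ≠ 0 :=
        Nat.cast_ne_zero.mpr (Nat.one_le_iff_ne_zero.mp (hd i1))
      rcases mul_eq_zero.mp h0 with h | h
      · exact h
      · rcases mul_eq_zero.mp h with h' | h'
        · exact absurd h' hd1
        · exact absurd h' hF1
    · intro i _ hne
      rw [hvan i (hmem i hne), mul_zero, mul_zero]
    · intro h
      exact absurd (Finset.mem_univ i1) h
  -- coefficients for the linear independence argument
  have hsum2 : ∀ k, ∑ i, (if i ∈ I then lam i * c i else 0) * a i (j i) k = 0 := by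
    intro k
    have : ∀ i, (if i ∈ I then lam i * c i else 0) * a i (j i) k = lam i * G i k := by
      intro i
      by_cases hi : i ∈ I
      · rw [if_pos hi, hrowI i hi k]
        ring
      · have : i = i1 := by
          by_contra h
          exact hi (hmem i h)
        rw [if_neg hi, this, hlam1]
        ring
    rw [Finset.sum_congr rfl (fun i _ => this i)]
    exact hcomb k
  have hli := hgen (fun i => ⟨i, j i⟩) (fun x y hxy => congrArg Sigma.fst hxy)
  rw [Fintype.linearIndependent_iff] at hli
  have hgz := hli (fun i => if i ∈ I then lam i * c i else 0) (by
    funext k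
    simp only [Finset.sum_apply, Pi.smul_apply, smul_eq_mul, Pi.zero_apply]
    exact hsum2 k)
  apply hlam0
  funext i
  show lam i = 0
  by_cases hi : i ∈ I
  · have h' : (if i ∈ I then lam i * c i else 0) = 0 := hgz i
    rw [if_pos hi] at h'
    rcases mul_eq_zero.mp h' with h | h
    · exact h
    · exact absurd h (hcne i hi)
  · have : i = i1 := by
      by_contra h
      exact hi (hmem i h)
    rw [this]
    exact hlam1
end

section
/- For every r ≥ 5/4, ∫₀^r 4π · h(s) ds = r − 1. -/
noncomputable def h (r : ℝ) : ℝ :=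
  if r ≤ 3 / 4 then 0
  else if r < 5 / 4 then
    (1 / (4 * Real.pi)) * (1 + Real.exp ((r - 1) / ((r - 1) ^ 2 - 1 / 16)))⁻¹
  else 1 / (4 * Real.pi)

open Real MeasureTheory intervalIntegral

lemma h_meas : Measurable h := by
  unfold h
  refine Measurable.ite (measurableSet_le measurable_id measurable_const) measurable_const ?_
  refine Measurable.ite (measurableSet_lt measurable_id measurable_const) ?_ measurable_const
  fun_prop

lemma h_nonneg (s : ℝ) : 0 ≤ h s := by
  have hπ := Real.pi_pos
  unfold h
  split_ifs <;> positivity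

lemma h_le (s : ℝ) : h s ≤ 1 / (4 * Real.pi) := by
  have hπ := Real.pi_pos
  unfold h
  split_ifs
  · positivity
  · have h1 : (1:ℝ) ≤ 1 + Real.exp ((s - 1) / ((s - 1) ^ 2 - 1 / 16)) := by
      nlinarith [Real.exp_pos ((s - 1) / ((s - 1) ^ 2 - 1 / 16))]
    calc (1 / (4 * Real.pi)) * (1 + Real.exp ((s - 1) / ((s - 1) ^ 2 - 1 / 16)))⁻¹
        ≤ (1 / (4 * Real.pi)) * 1 := by
          apply mul_le_mul_of_nonneg_left _ (by positivity)
          exact inv_le_one_of_one_le₀ h1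
      _ = 1 / (4 * Real.pi) := by ring
  · exact le_rfl

lemma hint (a b : ℝ) : IntervalIntegrable (fun s => 4 * Real.pi * h s) volume a b := by
  have hπ := Real.pi_pos
  refine (_root_.intervalIntegrable_const (c := (1:ℝ))).mono_fun
    ((h_meas.const_mul _).aestronglyMeasurable) ?_
  filter_upwards with s
  have h1 := h_nonneg s
  have h2 := h_le s
  rw [Real.norm_eq_abs, Real.norm_eq_abs, abs_of_nonneg (by positivity), abs_one]
  calc 4 * Real.pi * h s ≤ 4 * Real.pi * (1 / (4 * Real.pi)) :=
        mul_le_mul_of_nonneg_left h2 (by positivity)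
    _ = 1 := by field_simp

lemma key (s : ℝ) (hs : s ∈ Set.uIcc (3/4 : ℝ) (5/4)) :
    4 * Real.pi * h s + 4 * Real.pi * h (2 - s) = 1 := by
  have hπ := Real.pi_pos
  rw [Set.uIcc_of_le (by norm_num)] at hs
  obtain ⟨hs1, hs2⟩ := hs
  unfold h
  split_ifs <;> try linarith
  · -- s = 3/4
    field_simp
    ring
  · -- interior case
    have hd : (2 - s - 1 : ℝ) / ((2 - s - 1) ^ 2 - 1 / 16)
        = -((s - 1) / ((s - 1) ^ 2 - 1 / 16)) := by
      have e2 : ((2 - s - 1 : ℝ) ^ 2 - 1 / 16) = ((s - 1) ^ 2 - 1 / 16) := by ring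
      have e1 : (2 - s - 1 : ℝ) = -(s - 1) := by ring
      rw [e2, e1, neg_div]
    rw [hd, Real.exp_neg]
    set E := Real.exp ((s - 1) / ((s - 1) ^ 2 - 1 / 16)) with hE
    have hEpos : 0 < E := Real.exp_pos _
    have h1 : (1 : ℝ) + E ≠ 0 := by positivity
    have h2 : (1 : ℝ) + E⁻¹ ≠ 0 := by positivity
    field_simp
    ring
  · -- s = 5/4
    field_simp
    ring

/-- For every `r ≥ 5/4`, `∫₀^r 4π · h(s) ds = r − 1`. -/
theorem integral_h_eq (r : ℝ) (hr : 5 / 4 ≤ r) :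
    ∫ s in (0 : ℝ)..r, 4 * Real.pi * h s = r - 1 := by
  have hπ := Real.pi_pos
  have split1 : ∫ s in (0:ℝ)..r, 4 * Real.pi * h s
      = (∫ s in (0:ℝ)..(3/4), 4 * Real.pi * h s)
        + (∫ s in (3/4:ℝ)..(5/4), 4 * Real.pi * h s)
        + (∫ s in (5/4:ℝ)..r, 4 * Real.pi * h s) := by
    rw [integral_add_adjacent_intervals (hint 0 (3/4)) (hint (3/4) (5/4)),
        integral_add_adjacent_intervals (hint 0 (5/4)) (hint (5/4) r)]
  have p1 : (∫ s in (0:ℝ)..(3/4), 4 * Real.pi * h s) = 0 := by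
    rw [intervalIntegral.integral_congr (g := fun _ => 0)]
    · simp
    · intro s hs
      rw [Set.uIcc_of_le (by norm_num)] at hs
      simp only [h, if_pos hs.2]
      ring
  have p3 : (∫ s in (5/4:ℝ)..r, 4 * Real.pi * h s) = r - 5/4 := by
    rw [intervalIntegral.integral_congr (g := fun _ => 1)]
    · simp
    · intro s hs
      rw [Set.uIcc_of_le hr] at hs
      have hn1 : ¬ (s ≤ 3/4) := by linarith [hs.1]
      have hn2 : ¬ (s < 5/4) := by linarith [hs.1]
      simp only [h, if_neg hn1, if_neg hn2]
      field_simp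
  have p2 : (∫ s in (3/4:ℝ)..(5/4), 4 * Real.pi * h s) = 1/4 := by
    have hflip : (∫ s in (3/4:ℝ)..(5/4), 4 * Real.pi * h (2 - s))
        = ∫ s in (3/4:ℝ)..(5/4), 4 * Real.pi * h s := by
      have hc := intervalIntegral.integral_comp_sub_left
        (a := (3/4:ℝ)) (b := (5/4:ℝ)) (fun s => 4 * Real.pi * h s) 2
      norm_num at hc ⊢
    have hci : IntervalIntegrable (fun s => 4 * Real.pi * h (2 - s)) volume (3/4) (5/4) := by
      have hc := (hint (5/4) (3/4)).comp_sub_left 2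
      norm_num at hc
      exact hc
    have e : (∫ s in (3/4:ℝ)..(5/4), 4 * Real.pi * h s)
          + (∫ s in (3/4:ℝ)..(5/4), 4 * Real.pi * h s)
        = ∫ s in (3/4:ℝ)..(5/4), (4 * Real.pi * h s + 4 * Real.pi * h (2 - s)) := by
      rw [intervalIntegral.integral_add (hint (3/4) (5/4)) hci, hflip]
    have e2 : (∫ s in (3/4:ℝ)..(5/4),
        (4 * Real.pi * h s + 4 * Real.pi * h (2 - s))) = 1/2 := by
      rw [intervalIntegral.integral_congr (g := fun _ => 1) key]
      simp
      norm_num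
    linarith
  rw [split1, p1, p2, p3]; ring
end

section
/- There exists c ∈ (0, 1/2) such that H_c(r) = log⁺ r for every r ∈ [0, ∞) with r ∉ (1/2, 3/2). -/
open intervalIntegral

/-- `H c r = ∫₀^r 4π · h(s − c)/s ds` (the integrand vanishes for `s ≤ 3/4`,
so the integral is finite). -/
noncomputable def H (c r : ℝ) : ℝ := ∫ s in (0 : ℝ)..r, 4 * Real.pi * h (s - c) / s

noncomputable def g (x : ℝ) : ℝ := Real.smoothTransition (2 * x - 3 / 2)

lemma g_nonneg (x : ℝ) : 0 ≤ g x := Real.smoothTransition.nonneg _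
lemma g_le_one (x : ℝ) : g x ≤ 1 := Real.smoothTransition.le_one _
lemma g_zero {x : ℝ} (hx : x ≤ 3 / 4) : g x = 0 := by
  unfold g; exact Real.smoothTransition.zero_of_nonpos (by linarith)
lemma g_one {x : ℝ} (hx : 5 / 4 ≤ x) : g x = 1 := by
  unfold g; exact Real.smoothTransition.one_of_one_le (by linarith)

lemma st_symm (x : ℝ) : Real.smoothTransition x + Real.smoothTransition (1 - x) = 1 := by
  have hd := Real.smoothTransition.pos_denom x
  unfold Real.smoothTransition
  rw [sub_sub_cancel, add_comm (expNegInvGlue (1 - x))]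
  rw [← add_div, div_self hd.ne']

lemma g_symm (x : ℝ) : g x + g (2 - x) = 1 := by
  have := st_symm (2 * x - 3 / 2)
  unfold g
  convert this using 3
  ring

lemma h_eq (r : ℝ) : h r = 1 / (4 * Real.pi) * g r := by
  unfold h
  split_ifs with h1 h2
  · rw [g_zero h1, mul_zero]
  · push_neg at h1
    congr 1
    have hx0 : (0:ℝ) < 2 * r - 3 / 2 := by linarith
    have hx1 : 2 * r - 3 / 2 < 1 := by linarith
    have hden : (r - 1) ^ 2 - 1 / 16 < 0 := by nlinarith
    have e1 : expNegInvGlue (2 * r - 3 / 2) = Real.exp (-(2 * r - 3 / 2)⁻¹) := by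
      unfold expNegInvGlue; rw [if_neg (not_le.2 hx0)]
    have e2 : expNegInvGlue (1 - (2 * r - 3 / 2)) = Real.exp (-(1 - (2 * r - 3 / 2))⁻¹) := by
      unfold expNegInvGlue; rw [if_neg (not_le.2 (by linarith))]
    have hq : (r - 1) / ((r - 1) ^ 2 - 1 / 16)
        = (2 * r - 3 / 2)⁻¹ - (1 - (2 * r - 3 / 2))⁻¹ := by
      have h3 : (0:ℝ) < 1 - (2 * r - 3 / 2) := by linarith
      rw [inv_sub_inv hx0.ne' h3.ne',
        div_eq_div_iff hden.ne (mul_pos hx0 h3).ne']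
      ring
    unfold g Real.smoothTransition
    rw [e1, e2, hq]
    have key : Real.exp ((2 * r - 3 / 2)⁻¹ - (1 - (2 * r - 3 / 2))⁻¹)
        = Real.exp (-(1 - (2 * r - 3 / 2))⁻¹) / Real.exp (-(2 * r - 3 / 2)⁻¹) := by
      rw [← Real.exp_sub]; ring_nf
    rw [key]
    have hA : Real.exp (-(2 * r - 3 / 2)⁻¹) ≠ 0 := (Real.exp_pos _).ne'
    have hAB : Real.exp (-(2 * r - 3 / 2)⁻¹) + Real.exp (-(1 - (2 * r - 3 / 2))⁻¹) ≠ 0 := by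
      positivity
    field_simp
  · push_neg at h1 h2
    rw [g_one h2, mul_one]

lemma g_cont : Continuous g :=
  Real.smoothTransition.continuous.comp (by continuity)

noncomputable def E (s : ℝ) : ℝ := (max s (1 / 2))⁻¹
lemma E_cont : Continuous E := by
  apply (continuous_id.max continuous_const).inv₀
  intro s
  exact ne_of_gt (lt_of_lt_of_le (by norm_num) (le_max_right s (1/2)))
lemma E_eq {s : ℝ} (hs : 1 / 2 ≤ s) : E s = s⁻¹ := by rw [E, max_eq_left hs]
lemma E_nonneg (s : ℝ) : 0 ≤ E s := by rw [E]; positivity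

noncomputable def F (c s : ℝ) : ℝ := g (s - c) * E s

lemma F_cont : Continuous (Function.uncurry F) := by
  apply Continuous.mul
  · exact g_cont.comp (continuous_snd.sub continuous_fst)
  · exact E_cont.comp continuous_snd

lemma F_c_cont (c : ℝ) : Continuous (F c) := F_cont.comp (Continuous.prodMk_right c)

lemma F_int (c a b : ℝ) : IntervalIntegrable (F c) MeasureTheory.volume a b :=
  (F_c_cont c).intervalIntegrable a b

noncomputable def Φ (c : ℝ) : ℝ := ∫ s in (0:ℝ)..(3/2 : ℝ), F c s

lemma Φ_cont : Continuous Φ :=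
  intervalIntegral.continuous_parametric_intervalIntegral_of_continuous' F_cont 0 (3/2)

lemma Φ_quarter : Φ (1/4) ≤ Real.log (3/2) := by
  have hsplit := integral_add_adjacent_intervals (μ := MeasureTheory.volume)
    (F_int (1/4) 0 1) (F_int (1/4) 1 (3/2))
  have h1 : (∫ s in (0:ℝ)..(1:ℝ), F (1/4) s) = 0 := by
    rw [intervalIntegral.integral_congr (g := fun _ => (0:ℝ)) (fun s hs => ?_)]
    · simp
    · rw [Set.uIcc_of_le (by norm_num)] at hs
      simp only [F]
      rw [g_zero (by linarith [hs.2]), zero_mul]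
  have h2 : (∫ s in (1:ℝ)..(3/2:ℝ), F (1/4) s) ≤ Real.log (3/2) := by
    have hmono : (∫ s in (1:ℝ)..(3/2:ℝ), F (1/4) s) ≤ ∫ s in (1:ℝ)..(3/2:ℝ), s⁻¹ := by
      apply integral_mono_on (by norm_num) (F_int _ _ _)
        ((continuousOn_inv₀.mono (fun s hs => ?_)).intervalIntegrable)
      · intro s hs
        simp only [F]
        rw [E_eq (by linarith [hs.1])]
        have h0 : (0:ℝ) ≤ s⁻¹ := inv_nonneg.2 (by linarith [hs.1])
        nlinarith [g_le_one (s - 1/4), g_nonneg (s - 1/4), h0]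
      · rw [Set.uIcc_of_le (by norm_num)] at hs
        simp only [Set.mem_compl_iff, Set.mem_singleton_iff]
        intro h; rw [h] at hs; norm_num at hs
    have : (∫ s in (1:ℝ)..(3/2:ℝ), s⁻¹) = Real.log (3/2) := by
      rw [integral_inv (by rw [Set.uIcc_of_le (by norm_num)]; intro hm; norm_num at hm)]
      norm_num
    linarith
  unfold Φ
  rw [← hsplit, h1]
  linarith

lemma g_lb {x : ℝ} (h1 : 7 / 8 ≤ x) (h2 : x ≤ 15 / 16) : 1 / 22 ≤ g x := by
  have hy1 : (1:ℝ)/4 ≤ 2 * x - 3 / 2 := by linarith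
  have hy2 : 2 * x - 3 / 2 ≤ 3 / 8 := by linarith
  have hy0 : (0:ℝ) < 2 * x - 3 / 2 := by linarith
  have hy3 : (0:ℝ) < 1 - (2 * x - 3 / 2) := by linarith
  unfold g Real.smoothTransition
  have e1 : expNegInvGlue (2 * x - 3 / 2) = Real.exp (-(2 * x - 3 / 2)⁻¹) := by
    unfold expNegInvGlue; rw [if_neg (not_le.2 hy0)]
  have e2 : expNegInvGlue (1 - (2 * x - 3 / 2)) = Real.exp (-(1 - (2 * x - 3 / 2))⁻¹) := by
    unfold expNegInvGlue; rw [if_neg (not_le.2 (by linarith))]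
  rw [e1, e2]
  set A := Real.exp (-(2 * x - 3 / 2)⁻¹) with hA
  set B := Real.exp (-(1 - (2 * x - 3 / 2))⁻¹) with hB
  have hApos : 0 < A := Real.exp_pos _
  have hBpos : 0 < B := Real.exp_pos _
  have hBA : B ≤ 21 * A := by
    have h4 : (2 * x - 3 / 2)⁻¹ ≤ 4 := by
      rw [inv_le_comm₀ hy0 (by norm_num)]; linarith
    have h5 : (1:ℝ) ≤ (1 - (2 * x - 3 / 2))⁻¹ := by
      rw [le_inv_comm₀ (by norm_num) hy3]; linarith
    have hk : B = A * Real.exp ((2 * x - 3 / 2)⁻¹ - (1 - (2 * x - 3 / 2))⁻¹) := by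
      rw [hA, hB, ← Real.exp_add]; ring_nf
    have hexp3 : Real.exp ((2 * x - 3 / 2)⁻¹ - (1 - (2 * x - 3 / 2))⁻¹) ≤ 21 := by
      have : Real.exp ((2 * x - 3 / 2)⁻¹ - (1 - (2 * x - 3 / 2))⁻¹) ≤ Real.exp 3 :=
        Real.exp_le_exp.2 (by linarith)
      have h3 : Real.exp 3 < 21 := by
        have := Real.exp_one_lt_d9
        have e3 : Real.exp (3:ℝ) = Real.exp 1 ^ (3:ℕ) := by
          rw [Real.exp_one_pow]; norm_num
        rw [e3]
        have hp : Real.exp 1 ^ (3:ℕ) < 2.7182818286 ^ (3:ℕ) :=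
          pow_lt_pow_left₀ Real.exp_one_lt_d9 (Real.exp_pos 1).le (by norm_num)
        calc Real.exp 1 ^ (3:ℕ) < 2.7182818286 ^ (3:ℕ) := hp
          _ < 21 := by norm_num
      linarith
    rw [hk]
    nlinarith
  rw [le_div_iff₀ (by positivity)]
  nlinarith

set_option maxHeartbeats 1600000 in
lemma Φ_low : Real.log (3/2) ≤ Φ (1/10000) := by
  set Gf : ℝ → ℝ := fun u => g (u - 1/10000) * E (10001/5000 - u) with hGf
  set G' : ℝ → ℝ := fun s => g (20001/10000 - s) * E s with hG'
  have contGf : Continuous Gf :=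
    (g_cont.comp (continuous_id.sub continuous_const)).mul
      (E_cont.comp (continuous_const.sub continuous_id))
  have contG' : Continuous G' :=
    (g_cont.comp (continuous_const.sub continuous_id)).mul E_cont
  -- split Φ
  have hs1 := integral_add_adjacent_intervals (μ := MeasureTheory.volume)
    (F_int (1/10000) 0 (7501/10000)) (F_int (1/10000) (7501/10000) (3/2))
  have hs2 := integral_add_adjacent_intervals (μ := MeasureTheory.volume)
    (F_int (1/10000) (7501/10000) (10001/10000)) (F_int (1/10000) (10001/10000) (3/2))
  have hs3 := integral_add_adjacent_intervals (μ := MeasureTheory.volume)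
    (F_int (1/10000) (10001/10000) (12501/10000)) (F_int (1/10000) (12501/10000) (3/2))
  -- first piece = 0
  have h0 : (∫ s in (0:ℝ)..(7501/10000:ℝ), F (1/10000) s) = 0 := by
    rw [intervalIntegral.integral_congr (g := fun _ => (0:ℝ)) (fun s hs => ?_)]
    · simp
    · rw [Set.uIcc_of_le (by norm_num)] at hs
      simp only [F]
      rw [g_zero (by linarith [hs.2]), zero_mul]
  -- last piece
  have hlast : (∫ s in (12501/10000:ℝ)..(3/2:ℝ), F (1/10000) s)
      = Real.log ((3/2) / (12501/10000)) := by
    rw [intervalIntegral.integral_congr (g := fun s => s⁻¹) (fun s hs => ?_)]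
    · exact integral_inv (by rw [Set.uIcc_of_le (by norm_num)]; intro hm; have := hm.1; norm_num at this)
    · rw [Set.uIcc_of_le (by norm_num)] at hs
      simp only [F]
      rw [g_one (by linarith [hs.1]), E_eq (by linarith [hs.1]), one_mul]
  -- middle piece m..b via symmetry
  have hmb : (∫ s in (10001/10000:ℝ)..(12501/10000:ℝ), F (1/10000) s)
      = Real.log ((12501/10000) / (10001/10000)) - ∫ u in (7501/10000:ℝ)..(10001/10000:ℝ), Gf u := by
    have hcongr : (∫ s in (10001/10000:ℝ)..(12501/10000:ℝ), F (1/10000) s)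
        = ∫ s in (10001/10000:ℝ)..(12501/10000:ℝ), (E s - G' s) := by
      apply intervalIntegral.integral_congr
      intro s _
      have hsym := g_symm (s - 1/10000)
      have h2 : 2 - (s - 1/10000) = 20001/10000 - s := by ring
      rw [h2] at hsym
      simp only [F, hG']
      have hg : g (s - 1/10000) = 1 - g (20001/10000 - s) := by linarith
      rw [hg]; ring
    have hsub : (∫ s in (10001/10000:ℝ)..(12501/10000:ℝ), (E s - G' s))
        = (∫ s in (10001/10000:ℝ)..(12501/10000:ℝ), E s)
          - ∫ s in (10001/10000:ℝ)..(12501/10000:ℝ), G' s :=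
      integral_sub (E_cont.intervalIntegrable _ _) (contG'.intervalIntegrable _ _)
    have hE : (∫ s in (10001/10000:ℝ)..(12501/10000:ℝ), E s)
        = Real.log ((12501/10000) / (10001/10000)) := by
      rw [intervalIntegral.integral_congr (g := fun s => s⁻¹) (fun s hs => ?_)]
      · exact integral_inv (by rw [Set.uIcc_of_le (by norm_num)]; intro hm; have := hm.1; norm_num at this)
      · rw [Set.uIcc_of_le (by norm_num)] at hs
        exact E_eq (by linarith [hs.1])
    have hrefl : (∫ s in (10001/10000:ℝ)..(12501/10000:ℝ), G' s)
        = ∫ u in (7501/10000:ℝ)..(10001/10000:ℝ), Gf u := by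
      have hpt : ∀ s ∈ Set.uIcc (10001/10000:ℝ) (12501/10000:ℝ), G' s = Gf (10001/5000 - s) := by
        intro s _
        simp only [hG', hGf]
        rw [show (10001:ℝ)/5000 - s - 1/10000 = 20001/10000 - s by ring,
          show (10001:ℝ)/5000 - (10001/5000 - s) = s by ring]
      rw [intervalIntegral.integral_congr hpt, integral_comp_sub_left Gf (10001/5000),
        show (10001:ℝ)/5000 - 12501/10000 = 7501/10000 by norm_num,
        show (10001:ℝ)/5000 - 10001/10000 = 10001/10000 by norm_num]
    rw [hcongr, hsub, hE, hrefl]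
  -- lower bound for the a..m difference
  have hDpt : ∀ s ∈ Set.Icc (7501/10000:ℝ) (10001/10000:ℝ),
      F (1/10000) s - Gf s = g (s - 1/10000) * (s⁻¹ - (10001/5000 - s)⁻¹) := by
    intro s hs
    simp only [F, hGf]
    rw [E_eq (by linarith [hs.1]), E_eq (by linarith [hs.2])]
    ring
  have hDnn : ∀ s ∈ Set.Icc (7501/10000:ℝ) (10001/10000:ℝ),
      0 ≤ F (1/10000) s - Gf s := by
    intro s hs
    rw [hDpt s hs]
    have hinv : (10001/5000 - s)⁻¹ ≤ s⁻¹ := by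
      apply inv_anti₀ (by linarith [hs.1]) (by linarith [hs.2])
    exact mul_nonneg (g_nonneg _) (by linarith)
  have hintD : ∀ u v : ℝ, IntervalIntegrable (fun s => F (1/10000) s - Gf s)
      MeasureTheory.volume u v :=
    fun u v => ((F_c_cont (1/10000)).sub contGf).intervalIntegrable u v
  have hintL : ∀ u v : ℝ, IntervalIntegrable (fun s => (1/22) * (E s - E (10001/5000 - s)))
      MeasureTheory.volume u v :=
    fun u v => (continuous_const.mul (E_cont.sub (E_cont.comp
      (continuous_const.sub continuous_id)))).intervalIntegrable u v
  have hsplitD := integral_add_adjacent_intervals (μ := MeasureTheory.volume)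
    (hintD (7501/10000) (8751/10000)) (hintD (8751/10000) (10001/10000))
  have hsplitD2 := integral_add_adjacent_intervals (μ := MeasureTheory.volume)
    (hintD (8751/10000) (9376/10000)) (hintD (9376/10000) (10001/10000))
  have hJ1 : (0:ℝ) ≤ ∫ s in (7501/10000:ℝ)..(8751/10000:ℝ), (F (1/10000) s - Gf s) :=
    integral_nonneg (by norm_num) (fun u hu => hDnn u ⟨hu.1, by linarith [hu.2]⟩)
  have hJ3 : (0:ℝ) ≤ ∫ s in (9376/10000:ℝ)..(10001/10000:ℝ), (F (1/10000) s - Gf s) :=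
    integral_nonneg (by norm_num) (fun u hu => hDnn u ⟨by linarith [hu.1], hu.2⟩)
  have hJ2 : (∫ s in (8751/10000:ℝ)..(9376/10000:ℝ), (1/22) * (E s - E (10001/5000 - s)))
      ≤ ∫ s in (8751/10000:ℝ)..(9376/10000:ℝ), (F (1/10000) s - Gf s) := by
    apply integral_mono_on (by norm_num) (hintL _ _) (hintD _ _)
    intro s hs
    have hs' : s ∈ Set.Icc (7501/10000:ℝ) (10001/10000:ℝ) :=
      ⟨by linarith [hs.1], by linarith [hs.2]⟩
    rw [hDpt s hs']
    rw [E_eq (by linarith [hs.1]),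
      E_eq (show (1:ℝ)/2 ≤ 10001/5000 - s by linarith [hs.2])]
    have hinv : (10001/5000 - s)⁻¹ ≤ s⁻¹ :=
      inv_anti₀ (by linarith [hs.1]) (by linarith [hs.2])
    have hglb : 1/22 ≤ g (s - 1/10000) :=
      g_lb (by linarith [hs.1]) (by linarith [hs.2])
    exact mul_le_mul_of_nonneg_right hglb (by linarith)
  -- evaluate lower integral
  have hLval : (∫ s in (8751/10000:ℝ)..(9376/10000:ℝ), (1/22) * (E s - E (10001/5000 - s)))
      = (1/22) * (Real.log ((9376/10000)/(8751/10000))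
        - Real.log ((11251/10000)/(10626/10000))) := by
    rw [intervalIntegral.integral_const_mul]
    congr 1
    have hsub : (∫ s in (8751/10000:ℝ)..(9376/10000:ℝ), (E s - E (10001/5000 - s)))
        = (∫ s in (8751/10000:ℝ)..(9376/10000:ℝ), E s)
          - ∫ s in (8751/10000:ℝ)..(9376/10000:ℝ), E (10001/5000 - s) :=
      integral_sub (E_cont.intervalIntegrable _ _)
        ((E_cont.comp (continuous_const.sub continuous_id)).intervalIntegrable _ _)
    have hE1 : (∫ s in (8751/10000:ℝ)..(9376/10000:ℝ), E s)
        = Real.log ((9376/10000)/(8751/10000)) := by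
      rw [intervalIntegral.integral_congr (g := fun s => s⁻¹) (fun s hs => ?_)]
      · exact integral_inv (by rw [Set.uIcc_of_le (by norm_num)]; intro hm; have := hm.1; norm_num at this)
      · rw [Set.uIcc_of_le (by norm_num)] at hs
        exact E_eq (by linarith [hs.1])
    have hE2 : (∫ s in (8751/10000:ℝ)..(9376/10000:ℝ), E (10001/5000 - s))
        = Real.log ((11251/10000)/(10626/10000)) := by
      rw [integral_comp_sub_left E (10001/5000),
        show (10001:ℝ)/5000 - 9376/10000 = 10626/10000 by norm_num,
        show (10001:ℝ)/5000 - 8751/10000 = 11251/10000 by norm_num]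
      rw [intervalIntegral.integral_congr (g := fun s => s⁻¹) (fun s hs => ?_)]
      · exact integral_inv (by rw [Set.uIcc_of_le (by norm_num)]; intro hm; have := hm.1; norm_num at this)
      · rw [Set.uIcc_of_le (by norm_num)] at hs
        exact E_eq (by linarith [hs.1])
    rw [hsub, hE1, hE2]
  -- the difference of integrals over a..m
  have hdiff : (∫ s in (7501/10000:ℝ)..(10001/10000:ℝ), F (1/10000) s)
      - (∫ u in (7501/10000:ℝ)..(10001/10000:ℝ), Gf u)
      = ∫ s in (7501/10000:ℝ)..(10001/10000:ℝ), (F (1/10000) s - Gf s) :=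
    (integral_sub (F_int _ _ _) (contGf.intervalIntegrable _ _)).symm
  have hJ : (1/22) * (Real.log ((9376/10000)/(8751/10000))
        - Real.log ((11251/10000)/(10626/10000)))
      ≤ (∫ s in (7501/10000:ℝ)..(10001/10000:ℝ), F (1/10000) s)
        - ∫ u in (7501/10000:ℝ)..(10001/10000:ℝ), Gf u := by
    rw [hdiff, ← hsplitD, ← hsplitD2, ← hLval]
    linarith [hJ1, hJ2, hJ3]
  -- assemble
  have hΦ : Φ (1/10000)
      = (∫ s in (0:ℝ)..(7501/10000:ℝ), F (1/10000) s)
        + ((∫ s in (7501/10000:ℝ)..(10001/10000:ℝ), F (1/10000) s)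
          + ((∫ s in (10001/10000:ℝ)..(12501/10000:ℝ), F (1/10000) s)
            + ∫ s in (12501/10000:ℝ)..(3/2:ℝ), F (1/10000) s)) := by
    unfold Φ
    rw [hs3, hs2, hs1]
  rw [hΦ, h0, hlast, hmb]
  -- now pure log arithmetic
  have l1 : Real.log ((3:ℝ)/2 / (12501/10000))
      = Real.log ((3:ℝ)/2) - Real.log ((12501:ℝ)/10000) := Real.log_div (by norm_num) (by norm_num)
  have l2 : Real.log ((12501:ℝ)/10000 / (10001/10000))
      = Real.log ((12501:ℝ)/10000) - Real.log ((10001:ℝ)/10000) := Real.log_div (by norm_num) (by norm_num)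
  have l3 : Real.log ((9376:ℝ)/10000 / (8751/10000))
      = Real.log ((9376:ℝ)/10000) - Real.log ((8751:ℝ)/10000) := Real.log_div (by norm_num) (by norm_num)
  have l4 : Real.log ((11251:ℝ)/10000 / (10626/10000))
      = Real.log ((11251:ℝ)/10000) - Real.log ((10626:ℝ)/10000) := Real.log_div (by norm_num) (by norm_num)
  have hm : Real.log (10001/10000) ≤ 1/10000 := by
    have := Real.log_le_sub_one_of_pos (show (0:ℝ) < 10001/10000 by norm_num)
    linarith
  set W : ℝ := (9376 * 10626 : ℝ) / (8751 * 11251) with hWdef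
  have hWpos : (0:ℝ) < W := by rw [hWdef]; norm_num
  have hWlog : Real.log W = Real.log (9376/10000) + Real.log (10626/10000)
      - Real.log (8751/10000) - Real.log (11251/10000) := by
    rw [show W = ((9376/10000:ℝ) * (10626/10000)) / ((8751/10000) * (11251/10000)) by
        rw [hWdef]; norm_num,
      Real.log_div (by norm_num) (by norm_num),
      Real.log_mul (by norm_num) (by norm_num), Real.log_mul (by norm_num) (by norm_num)]
    ring
  have hWlb : 1 - W⁻¹ ≤ Real.log W := by
    have := Real.log_le_sub_one_of_pos (show (0:ℝ) < W⁻¹ by positivity)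
    rw [Real.log_inv] at this
    linarith
  have hnum : (22:ℝ)/10000 ≤ 1 - W⁻¹ := by
    rw [hWdef]
    norm_num
  linarith only [hJ, hm, hWlog, hWlb, hnum, l1, l2, l3, l4]

lemma H_eq {c : ℝ} (hc : 0 ≤ c) (r : ℝ) : H c r = ∫ s in (0:ℝ)..r, F c s := by
  unfold H
  apply intervalIntegral.integral_congr
  intro s _
  show 4 * Real.pi * h (s - c) / s = F c s
  rcases le_or_gt s (1/2) with hs | hs
  · rw [h_eq, g_zero (show s - c ≤ 3/4 by linarith)]
    simp [F, g_zero (show s - c ≤ 3/4 by linarith)]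
  · have hng : 4 * Real.pi * (1 / (4 * Real.pi) * g (s - c)) = g (s - c) := by
      have hπ : Real.pi ≠ 0 := Real.pi_ne_zero
      field_simp
    rw [h_eq, hng, F, E_eq hs.le, div_eq_mul_inv]

/-- There exists `c ∈ (0, 1/2)` such that `H c r = log⁺ r` for every
`r ∈ [0, ∞)` with `r ∉ (1/2, 3/2)`. -/
theorem exists_shift_H_eq_logPlus :
    ∃ c ∈ Set.Ioo (0 : ℝ) (1 / 2),
      ∀ r : ℝ, 0 ≤ r → r ∉ Set.Ioo (1 / 2 : ℝ) (3 / 2) → H c r = max (Real.log r) 0 := by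
  have hIVT := intermediate_value_Icc' (by norm_num : (1/10000:ℝ) ≤ 1/4) Φ_cont.continuousOn
  have hmem : Real.log (3/2) ∈ Set.Icc (Φ (1/4)) (Φ (1/10000)) := ⟨Φ_quarter, Φ_low⟩
  obtain ⟨c, hcI, hΦc⟩ := hIVT hmem
  have hc0 : (0:ℝ) ≤ c := by linarith [hcI.1]
  refine ⟨c, ⟨by linarith [hcI.1], by linarith [hcI.2]⟩, ?_⟩
  intro r hr hnot
  rcases le_or_gt r (1/2) with h12 | h12
  · rw [H_eq hc0 r]
    have hz : (∫ s in (0:ℝ)..r, F c s) = 0 := by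
      rw [intervalIntegral.integral_congr (g := fun _ => (0:ℝ)) (fun s hs => ?_)]
      · simp
      · rw [Set.uIcc_of_le hr] at hs
        simp only [F]
        rw [g_zero (show s - c ≤ 3/4 by linarith [hs.2]), zero_mul]
    rw [hz, max_eq_right (Real.log_nonpos hr (by linarith))]
  · have h32 : (3/2:ℝ) ≤ r := by
      by_contra hlt
      push_neg at hlt
      exact hnot ⟨h12, hlt⟩
    rw [H_eq hc0 r]
    have hsplit := integral_add_adjacent_intervals (μ := MeasureTheory.volume)
      (F_int c 0 (3/2)) (F_int c (3/2) r)
    have htail : (∫ s in (3/2:ℝ)..r, F c s) = Real.log (r / (3/2)) := by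
      rw [intervalIntegral.integral_congr (g := fun s => s⁻¹) (fun s hs => ?_)]
      · exact integral_inv (by rw [Set.uIcc_of_le h32]; intro hm; have := hm.1; norm_num at this)
      · rw [Set.uIcc_of_le h32] at hs
        simp only [F]
        rw [g_one (show (5/4:ℝ) ≤ s - c by
            have := hcI.2; have := hs.1; linarith),
          E_eq (by linarith [hs.1]), one_mul]
    have hΦ' : (∫ s in (0:ℝ)..(3/2:ℝ), F c s) = Real.log (3/2) := hΦc
    rw [← hsplit, hΦ', htail,
      Real.log_div (show r ≠ 0 from ne_of_gt (by linarith)) (by norm_num)]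
    have hcollect : Real.log (3/2) + (Real.log r - Real.log (3/2)) = Real.log r := by ring
    rw [hcollect, max_eq_left (Real.log_nonneg (by linarith))]
end

section
/- There exists a function σ : ℂ ∖ E → ℝ, infinitely differentiable on the open set ℂ ∖ E, such that: (i) σ(z) ≥ σ̂(z) for every z ∈ ℂ ∖ E; (ii) σ(z) = σ̂(z) for every z outside the set U := {z : 1/2 ≤ |z| ≤ 3/2} ∪ ⋃_{j≥1} {z : r_j/2 ≤ |z − a_j| ≤ 3r_j/2} (i.e. the difference σ − σ̂ is supported in U); and (iii) σ(z) = σ̂(z) for every z ∈ ℂ ∖ E satisfying |z − a_j| > 3r_j/2 for all j and σ(z) ≥ 3/2. -/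
/-- `log⁺ x = max (log x) 0`. -/
noncomputable def logPlus (x : ℝ) : ℝ := max (Real.log x) 0

/-- `τ̂(z) = log⁺|z| + ∑_{j} r j · log⁺(r j / |z − a j|)`. -/
noncomputable def tauHat (a : ℕ → ℂ) (r : ℕ → ℝ) (z : ℂ) : ℝ :=
  logPlus (‖z‖) + ∑' j, r j * logPlus (r j / ‖z - a j‖)

/-- `σ̂ = exp τ̂`. -/
noncomputable def sigmaHat (a : ℕ → ℂ) (r : ℕ → ℝ) (z : ℂ) : ℝ :=
  Real.exp (tauHat a r z)

/-- A smooth version of `t ↦ max t 0`: it agrees with `max t 0` for `|t| ≥ 1/5`,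
dominates it everywhere, and exceeds it by at most `1/10`. -/
noncomputable def phiSm (t : ℝ) : ℝ :=
  t * Real.smoothTransition (5 * t + 1 / 2) +
    (1 / 10) * (Real.smoothTransition (10 * t + 2) * Real.smoothTransition (2 - 10 * t))

lemma phiSm_contDiff : ContDiff ℝ (⊤ : ℕ∞) phiSm := by
  have h : ∀ c d : ℝ, ContDiff ℝ (⊤ : ℕ∞) fun t : ℝ => Real.smoothTransition (c * t + d) := by
    intro c d
    exact Real.smoothTransition.contDiff.comp ((contDiff_const.mul contDiff_id).add contDiff_const)
  have h2 : ContDiff ℝ (⊤ : ℕ∞) fun t : ℝ => Real.smoothTransition (2 - 10 * t) := by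
    exact Real.smoothTransition.contDiff.comp (contDiff_const.sub (contDiff_const.mul contDiff_id))
  exact (contDiff_id.mul (h 5 (1/2))).add (contDiff_const.mul ((h 10 2).mul h2))

lemma phiSm_eq_zero {t : ℝ} (h : t ≤ -(1/5)) : phiSm t = 0 := by
  unfold phiSm
  rw [Real.smoothTransition.zero_of_nonpos (by linarith),
    Real.smoothTransition.zero_of_nonpos (x := 10 * t + 2) (by linarith)]
  ring

lemma phiSm_eq_id {t : ℝ} (h : 1/5 ≤ t) : phiSm t = t := by
  unfold phiSm
  rw [Real.smoothTransition.one_of_one_le (by linarith),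
    Real.smoothTransition.zero_of_nonpos (x := 2 - 10 * t) (by linarith)]
  ring

lemma max_le_phiSm (t : ℝ) : max t 0 ≤ phiSm t := by
  have g0 := Real.smoothTransition.nonneg (5 * t + 1 / 2)
  have g1 := Real.smoothTransition.le_one (5 * t + 1 / 2)
  have b10 := Real.smoothTransition.nonneg (10 * t + 2)
  have b11 := Real.smoothTransition.le_one (10 * t + 2)
  have b20 := Real.smoothTransition.nonneg (2 - 10 * t)
  have b21 := Real.smoothTransition.le_one (2 - 10 * t)
  unfold phiSm
  rcases le_or_gt t (-(1/10)) with h | h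
  · rw [Real.smoothTransition.zero_of_nonpos (by linarith), max_le_iff]
    constructor
    · nlinarith
    · nlinarith
  · rcases le_or_gt (1/10) t with h' | h'
    · rw [Real.smoothTransition.one_of_one_le (by linarith), max_le_iff]
      constructor
      · nlinarith
      · nlinarith
    · rw [Real.smoothTransition.one_of_one_le (x := 10 * t + 2) (by linarith),
        Real.smoothTransition.one_of_one_le (x := 2 - 10 * t) (by linarith), max_le_iff]
      constructor
      · rcases le_or_gt t 0 with ht | ht
        · nlinarith
        · nlinarith
      · rcases le_or_gt t 0 with ht | ht
        · nlinarith
        · nlinarith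

lemma phiSm_nonneg (t : ℝ) : 0 ≤ phiSm t :=
  le_trans (le_max_right t 0) (max_le_phiSm t)

lemma phiSm_le (t : ℝ) : phiSm t ≤ max t 0 + 1/10 := by
  have g0 := Real.smoothTransition.nonneg (5 * t + 1 / 2)
  have g1 := Real.smoothTransition.le_one (5 * t + 1 / 2)
  have b10 := Real.smoothTransition.nonneg (10 * t + 2)
  have b11 := Real.smoothTransition.le_one (10 * t + 2)
  have b20 := Real.smoothTransition.nonneg (2 - 10 * t)
  have b21 := Real.smoothTransition.le_one (2 - 10 * t)
  unfold phiSm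
  rcases le_or_gt t 0 with ht | ht
  · rw [max_eq_right ht]
    nlinarith
  · rw [max_eq_left ht.le]
    nlinarith

/-- `1 - 1/x ≤ log x` for `x > 0`. -/
lemma one_sub_inv_le_log {x : ℝ} (hx : 0 < x) : 1 - x⁻¹ ≤ Real.log x := by
  have h := Real.log_le_sub_one_of_pos (inv_pos.2 hx)
  rw [Real.log_inv] at h
  linarith

lemma third_le_log_three_halves : (1/3 : ℝ) ≤ Real.log (3/2) := by
  have := one_sub_inv_le_log (x := 3/2) (by norm_num)
  norm_num at this
  linarith

lemma half_le_log_two : (1/2 : ℝ) ≤ Real.log 2 := by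
  have := one_sub_inv_le_log (x := 2) (by norm_num)
  norm_num at this
  linarith

/-- If `0 < x ≤ 2/3` or `x ≥ 2` then the smoothed `log⁺` agrees with `log⁺`. -/
lemma phiSm_log_eq {x : ℝ} (hx : 0 < x) (h : x ≤ 2/3 ∨ 2 ≤ x) :
    phiSm (Real.log x) = logPlus x := by
  rcases h with h | h
  · have h1 : Real.log x ≤ Real.log (2/3) := Real.log_le_log hx h
    have h2 : Real.log (2/3) = - Real.log (3/2) := by
      rw [show (2/3 : ℝ) = (3/2)⁻¹ by norm_num, Real.log_inv]
    have h3 : Real.log x ≤ -(1/5) := by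
      have := third_le_log_three_halves; rw [h2] at h1; linarith
    rw [phiSm_eq_zero h3, logPlus, max_eq_right (by linarith)]
  · have h1 : Real.log 2 ≤ Real.log x := Real.log_le_log (by norm_num) h
    have h3 : (1/5 : ℝ) ≤ Real.log x := by have := half_le_log_two; linarith
    rw [phiSm_eq_id h3, logPlus, max_eq_left (by linarith)]

/-- Smoothed version of `log⁺|z|`, with a cutoff killing the junk value of `log` at `0`. -/
noncomputable def PhiC (z : ℂ) : ℝ :=
  Real.smoothTransition (4 * ‖z‖ - 1) * phiSm (Real.log (‖z‖))

/-- Smoothed version of the `j`-th summand. -/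
noncomputable def termS (a : ℕ → ℂ) (r : ℕ → ℝ) (j : ℕ) (z : ℂ) : ℝ :=
  r j * phiSm (Real.log (r j / ‖z - a j‖))

lemma logPlus_le_PhiC (z : ℂ) : logPlus (‖z‖) ≤ PhiC z := by
  rcases le_or_gt (‖z‖) (1/2) with h | h
  · have h1 : Real.log (‖z‖) ≤ 0 :=
      Real.log_nonpos (norm_nonneg z) (by linarith)
    have h2 : logPlus (‖z‖) = 0 := max_eq_right h1
    rw [h2]
    exact mul_nonneg (Real.smoothTransition.nonneg _) (phiSm_nonneg _)
  · have h1 : Real.smoothTransition (4 * ‖z‖ - 1) = 1 :=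
      Real.smoothTransition.one_of_one_le (by linarith)
    rw [PhiC, h1, one_mul]
    exact max_le_phiSm _

lemma PhiC_eq {z : ℂ} (h : ‖z‖ < 1/2 ∨ 3/2 < ‖z‖) :
    PhiC z = logPlus (‖z‖) := by
  rcases h with h | h
  · rcases eq_or_lt_of_le (norm_nonneg z) with h0 | h0
    · rw [PhiC, ← h0, Real.log_zero, logPlus, Real.log_zero]
      rw [Real.smoothTransition.zero_of_nonpos (by norm_num)]
      simp
    · have h1 : Real.log (‖z‖) ≤ Real.log (2/3) :=
        Real.log_le_log h0 (by linarith)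
      have h2 : Real.log (2/3) = - Real.log (3/2) := by
        rw [show (2/3 : ℝ) = (3/2)⁻¹ by norm_num, Real.log_inv]
      have h3 : Real.log (‖z‖) ≤ -(1/5) := by
        have := third_le_log_three_halves; rw [h2] at h1; linarith
      rw [PhiC, phiSm_eq_zero h3, mul_zero, logPlus, max_eq_right (by linarith)]
  · have h1 : Real.smoothTransition (4 * ‖z‖ - 1) = 1 :=
      Real.smoothTransition.one_of_one_le (by linarith)
    have h2 : Real.log (3/2) ≤ Real.log (‖z‖) :=
      Real.log_le_log (by norm_num) h.le
    have h3 : (1/5 : ℝ) ≤ Real.log (‖z‖) := by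
      have := third_le_log_three_halves; linarith
    rw [PhiC, h1, one_mul, phiSm_eq_id h3, logPlus, max_eq_left (by linarith)]

/-- There exists a function `σ`, infinitely differentiable on the open set
`ℂ ∖ E`, such that (i) `σ ≥ σ̂` on `ℂ ∖ E`; (ii) `σ = σ̂` outside
`U = {1/2 ≤ |z| ≤ 3/2} ∪ ⋃_j {r j/2 ≤ |z − a j| ≤ 3 r j/2}`; and (iii) `σ(z) = σ̂(z)` for
every `z ∈ ℂ ∖ E` with `|z − a j| > 3 r j/2` for all `j` and `σ(z) ≥ 3/2`. -/
theorem exists_smoothing_of_sigmaHat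
    (a : ℕ → ℂ) (r : ℕ → ℝ)
    (ha : Function.Injective a)
    (ha' : Filter.Tendsto (fun j => ‖a j‖) Filter.atTop Filter.atTop)
    (hr : ∀ j, r j ∈ Set.Ioo (0 : ℝ) 1)
    (hdisj : Pairwise fun i j =>
      Disjoint (Metric.closedBall (a i) (2 * r i)) (Metric.closedBall (a j) (2 * r j)))
    (hsum : Summable r) :
    ∃ σ : ℂ → ℝ,
      ContDiffOn ℝ (⊤ : ℕ∞) σ (Set.range a)ᶜ ∧
      (∀ z ∈ (Set.range a)ᶜ, sigmaHat a r z ≤ σ z) ∧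
      (∀ z ∈ (Set.range a)ᶜ,
        z ∉ ({w : ℂ | 1 / 2 ≤ ‖w‖ ∧ ‖w‖ ≤ 3 / 2} ∪
          ⋃ j, {w : ℂ | r j / 2 ≤ ‖w - a j‖ ∧
            ‖w - a j‖ ≤ 3 * r j / 2}) →
        σ z = sigmaHat a r z) ∧
      (∀ z ∈ (Set.range a)ᶜ, (∀ j, 3 * r j / 2 < ‖z - a j‖) →
        3 / 2 ≤ σ z → σ z = sigmaHat a r z) := by
  classical
  -- vanishing of the smoothed and original summands far from `a j`
  have htermS0 : ∀ j (z : ℂ), 3 * r j / 2 ≤ ‖z - a j‖ → termS a r j z = 0 := by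
    intro j z h
    have hrj := (hr j).1
    have hd : 0 < ‖z - a j‖ := lt_of_lt_of_le (by linarith) h
    have hx : r j / ‖z - a j‖ ≤ 2/3 := by
      rw [div_le_iff₀ hd]; linarith
    have hx0 : 0 < r j / ‖z - a j‖ := div_pos hrj hd
    rw [termS, phiSm_log_eq hx0 (Or.inl hx), logPlus,
      max_eq_right (Real.log_nonpos hx0.le (by linarith)), mul_zero]
  have htermH0 : ∀ j (z : ℂ), 3 * r j / 2 ≤ ‖z - a j‖ →
      r j * logPlus (r j / ‖z - a j‖) = 0 := by
    intro j z h
    have hrj := (hr j).1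
    have hd : 0 < ‖z - a j‖ := lt_of_lt_of_le (by linarith) h
    have hx : r j / ‖z - a j‖ ≤ 2/3 := by
      rw [div_le_iff₀ hd]; linarith
    have hx0 : 0 < r j / ‖z - a j‖ := div_pos hrj hd
    rw [logPlus, max_eq_right (Real.log_nonpos hx0.le (by linarith)), mul_zero]
  -- at most one index can be close
  have hclose : ∀ z : ℂ, ∃ s : Finset ℕ, ∀ j ∉ s, 3 * r j / 2 ≤ ‖z - a j‖ := by
    intro z
    by_cases h : ∃ j, ‖z - a j‖ < 3 * r j / 2
    · obtain ⟨j₀, hj₀⟩ := h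
      refine ⟨{j₀}, fun j hj => ?_⟩
      have hne : j ≠ j₀ := by simpa using hj
      by_contra hc
      push_neg at hc
      have h1 : z ∈ Metric.closedBall (a j) (2 * r j) := by
        rw [Metric.mem_closedBall, Complex.dist_eq]
        have := (hr j).1; linarith
      have h2 : z ∈ Metric.closedBall (a j₀) (2 * r j₀) := by
        rw [Metric.mem_closedBall, Complex.dist_eq]
        have := (hr j₀).1; linarith
      exact Set.disjoint_left.mp (hdisj hne) h1 h2
    · push_neg at h
      exact ⟨∅, fun j _ => h j⟩
  have hsummS : ∀ z : ℂ, Summable fun j => termS a r j z := by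
    intro z
    obtain ⟨s, hs⟩ := hclose z
    exact summable_of_ne_finset_zero (s := s) fun j hj => htermS0 j z (hs j hj)
  have hsummH : ∀ z : ℂ, Summable fun j => r j * logPlus (r j / ‖z - a j‖) := by
    intro z
    obtain ⟨s, hs⟩ := hclose z
    exact summable_of_ne_finset_zero (s := s) fun j hj => htermH0 j z (hs j hj)
  refine ⟨fun z => Real.exp (PhiC z + ∑' j, termS a r j z), ?_, ?_, ?_, ?_⟩
  · -- smoothness
    intro z₀ hz₀
    rw [Set.mem_compl_iff] at hz₀
    have hPhiC : ContDiffAt ℝ (⊤ : ℕ∞) PhiC z₀ := by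
      clear hz₀
      rcases lt_or_ge (‖z₀‖) (1/4) with h | h
      · have hopen : IsOpen {w : ℂ | ‖w‖ < 1/4} :=
          isOpen_lt continuous_norm continuous_const
      -- PhiC vanishes on this neighbourhood
        refine (contDiffAt_const (c := (0:ℝ))).congr_of_eventuallyEq ?_
        filter_upwards [hopen.mem_nhds h] with w hw
        have hw' : ‖w‖ < 1/4 := hw
        rw [PhiC, Real.smoothTransition.zero_of_nonpos (by linarith), zero_mul]
      · have hz : z₀ ≠ 0 := by
          intro h0; rw [h0] at h; simp at h; linarith
        have habs : ContDiffAt ℝ (⊤ : ℕ∞) (fun w : ℂ => ‖w‖) z₀ := by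
          have := contDiffAt_norm ℂ (E := ℂ) (n := (⊤ : ℕ∞)) hz
          refine this.congr_of_eventuallyEq ?_
          filter_upwards with w using rfl
        have hne : ‖z₀‖ ≠ 0 := by
          simpa using hz
        have hlog : ContDiffAt ℝ (⊤ : ℕ∞) (fun w : ℂ => Real.log (‖w‖)) z₀ :=
          (Real.contDiffAt_log.2 hne).comp z₀ habs
        exact ((Real.smoothTransition.contDiff.contDiffAt).comp z₀
            (((contDiffAt_const (c := (4:ℝ))).mul habs).sub contDiffAt_const)).mul
          ((phiSm_contDiff.contDiffAt).comp z₀ hlog)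
    have hS : ContDiffAt ℝ (⊤ : ℕ∞) (fun z => ∑' j, termS a r j z) z₀ := by
      obtain ⟨N, hN⟩ := (ha'.eventually_gt_atTop (‖z₀‖ + 4)).exists_forall_of_atTop
      have hev : (fun z => ∑' j, termS a r j z) =ᶠ[nhds z₀]
          fun z => ∑ j ∈ Finset.range N, termS a r j z := by
        filter_upwards [Metric.ball_mem_nhds z₀ one_pos] with z hz
        refine tsum_eq_sum fun j hj => ?_
        have hNj : N ≤ j := by simpa using hj
        have hbig : ‖z₀‖ + 4 < ‖a j‖ := hN j hNj
        have h1 : ‖z‖ ≤ ‖z₀‖ + 1 := by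
          have hd : dist z z₀ < 1 := Metric.mem_ball.mp hz
          rw [Complex.dist_eq] at hd
          calc ‖z‖ = ‖z - z₀ + z₀‖ := by ring_nf
            _ ≤ ‖z - z₀‖ + ‖z₀‖ := norm_add_le _ _
            _ ≤ ‖z₀‖ + 1 := by linarith
        have h2 : ‖a j‖ - ‖z‖ ≤ ‖z - a j‖ := by
          have := norm_add_le (z - a j) (a j - z + a j)
          have h3 : ‖a j‖ ≤ ‖a j - z‖ + ‖z‖ :=
            by simpa using norm_add_le (a j - z) z
          have h4 : ‖a j - z‖ = ‖z - a j‖ := by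
            rw [← norm_neg]; ring_nf
          linarith [h4 ▸ h3]
        have hrj := (hr j).2
        have hrj' := (hr j).1
        exact htermS0 j z (by linarith)
      refine (ContDiffAt.sum fun j hj => ?_).congr_of_eventuallyEq hev
      -- each summand is smooth at z₀ since z₀ ≠ a j
      have hzaj : z₀ ≠ a j := fun h => hz₀ ⟨j, h.symm⟩
      have hsub : z₀ - a j ≠ 0 := sub_ne_zero.2 hzaj
      have habs : ContDiffAt ℝ (⊤ : ℕ∞) (fun z : ℂ => ‖z - a j‖) z₀ := by
        have h1 : ContDiffAt ℝ (⊤ : ℕ∞) (fun z : ℂ => ‖z - a j‖) z₀ :=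
          (contDiffAt_norm ℂ (E := ℂ) (n := (⊤ : ℕ∞)) hsub).comp z₀
            (contDiffAt_id.sub contDiffAt_const)
        refine h1.congr_of_eventuallyEq ?_
        filter_upwards with w using rfl
      have hdne : ‖z₀ - a j‖ ≠ 0 := norm_ne_zero_iff.mpr hsub
      have hdiv : ContDiffAt ℝ (⊤ : ℕ∞) (fun z : ℂ => r j / ‖z - a j‖) z₀ :=
        (contDiffAt_const (c := r j)).div habs hdne
      have hxne : r j / ‖z₀ - a j‖ ≠ 0 :=
        ne_of_gt (div_pos (hr j).1 (lt_of_le_of_ne (norm_nonneg _) (Ne.symm hdne)))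
      have hlog : ContDiffAt ℝ (⊤ : ℕ∞)
          (fun z : ℂ => Real.log (r j / ‖z - a j‖)) z₀ :=
        (Real.contDiffAt_log.2 hxne).comp (g := Real.log) z₀ hdiv
      exact (contDiffAt_const (c := r j)).mul ((phiSm_contDiff.contDiffAt).comp z₀ hlog)
    exact ((Real.contDiff_exp.contDiffAt).comp z₀ (hPhiC.add hS)).contDiffWithinAt
  · -- (i) domination
    intro z hz
    rw [Set.mem_compl_iff] at hz
    rw [sigmaHat, Real.exp_le_exp, tauHat]
    refine add_le_add (logPlus_le_PhiC z) (Summable.tsum_le_tsum (fun j => ?_) (hsummH z) (hsummS z))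
    have hrj := (hr j).1
    rcases eq_or_ne (‖z - a j‖) 0 with hd | hd
    · rw [hd]
      simp only [div_zero, termS, hd, div_zero]
      exact mul_le_mul_of_nonneg_left (by rw [logPlus]; exact max_le_phiSm _) hrj.le
    · exact mul_le_mul_of_nonneg_left (by rw [logPlus]; exact max_le_phiSm _) hrj.le
  · -- (ii) equality outside U
    intro z hz hU
    rw [Set.mem_compl_iff] at hz
    rw [Set.mem_union, not_or] at hU
    obtain ⟨hU1, hU2⟩ := hU
    rw [Set.mem_setOf_eq, not_and_or, not_le, not_le] at hU1
    have htau : PhiC z + ∑' j, termS a r j z = tauHat a r z := by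
      rw [tauHat, PhiC_eq hU1]
      refine congrArg (fun t => logPlus (‖z‖) + t) (tsum_congr fun j => ?_)
      have hj : z ∉ {w : ℂ | r j / 2 ≤ ‖w - a j‖ ∧
          ‖w - a j‖ ≤ 3 * r j / 2} := fun h => hU2 (Set.mem_iUnion.2 ⟨j, h⟩)
      rw [Set.mem_setOf_eq, not_and_or, not_le, not_le] at hj
      have hzaj : z ≠ a j := fun h => hz ⟨j, h.symm⟩
      have hd : 0 < ‖z - a j‖ := by
        simpa using sub_ne_zero.2 hzaj
      have hrj := (hr j).1
      have hx0 : 0 < r j / ‖z - a j‖ := div_pos hrj hd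
      rw [termS]
      congr 1
      rcases hj with hj | hj
      · refine phiSm_log_eq hx0 (Or.inr ?_)
        rw [le_div_iff₀ hd]; linarith
      · refine phiSm_log_eq hx0 (Or.inl ?_)
        rw [div_le_iff₀ hd]; linarith
    show Real.exp (PhiC z + ∑' j, termS a r j z) = sigmaHat a r z
    rw [htau, sigmaHat]
  · -- (iii)
    intro z hz hfar hge
    rw [Set.mem_compl_iff] at hz
    have hS0 : ∑' j, termS a r j z = 0 := by
      rw [tsum_eq_sum (s := (∅ : Finset ℕ)) fun j _ => htermS0 j z (hfar j).le]
      simp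
    have hH0 : (∑' j, r j * logPlus (r j / ‖z - a j‖)) = 0 := by
      rw [tsum_eq_sum (s := (∅ : Finset ℕ)) fun j _ => htermH0 j z (hfar j).le]
      simp
    have hge' : 3/2 ≤ Real.exp (PhiC z) := by
      have : (3:ℝ)/2 ≤ Real.exp (PhiC z + ∑' j, termS a r j z) := hge
      rwa [hS0, add_zero] at this
    refine Eq.trans (show Real.exp (PhiC z + ∑' j, termS a r j z)
        = Real.exp (PhiC z) by rw [hS0, add_zero]) ?_
    rw [sigmaHat, tauHat, hH0, add_zero]
    refine congrArg Real.exp ?_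
    -- now `3/2 ≤ exp (PhiC z)` forces `|z| > 1`
    have hlog32 : Real.log (3/2) ≤ PhiC z := by
      have := Real.log_le_log (by norm_num : (0:ℝ) < 3/2) hge'
      rwa [Real.log_exp] at this
    have h13 : (1/3 : ℝ) ≤ PhiC z := le_trans third_le_log_three_halves hlog32
    have hne0 : ‖z‖ ≠ 0 := by
      intro h0
      rw [PhiC, h0, Real.smoothTransition.zero_of_nonpos (by norm_num), zero_mul] at h13
      norm_num at h13
    have hle : PhiC z ≤ phiSm (Real.log (‖z‖)) := by
      rw [PhiC]
      exact mul_le_of_le_one_left (phiSm_nonneg _) (Real.smoothTransition.le_one _)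
    have hmax : (7/30 : ℝ) ≤ max (Real.log (‖z‖)) 0 := by
      have := phiSm_le (Real.log (‖z‖))
      linarith
    have hlogz : (7/30 : ℝ) ≤ Real.log (‖z‖) := by
      rcases le_or_gt (Real.log (‖z‖)) 0 with h | h
      · rw [max_eq_right h] at hmax; norm_num at hmax
      · rwa [max_eq_left h.le] at hmax
    have habs1 : (1 : ℝ) < ‖z‖ := by
      by_contra hc
      push_neg at hc
      have := Real.log_nonpos (norm_nonneg z) hc
      linarith
    rw [PhiC, Real.smoothTransition.one_of_one_le (by linarith), one_mul,
      phiSm_eq_id (by linarith), logPlus, max_eq_left (by linarith)]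
end
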